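/- arXiv:0810.4617 — 2 statements merged into one kernel-verified Lean document; each statement's English description precedes it below -/
import Mathlib

section
/- If the similarity matrix S is symmetric, then for every λ ∈ ℝ^c with Σ_{p=1}^c λ_p = 1 one has Q(M(λ)) = C + Σ_{i ≤ l, j > l} S_{ij} ‖Y_i − λ‖², where C = (1/2) Σ_{i ≤ l, j ≤ l} S_{ij} ‖Y_i − Y_j‖². -/
open Finset

section Energy

variable {ι E : Type*} [Fintype ι] [SeminormedAddCommGroup E]

theorem Finset.sum_sum_eq_sum_blocks {M : Type*} [AddCommMonoid M] (p : ι → Prop)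
    [DecidablePred p] (K : ι → ι → M) :
    ∑ i, ∑ j, K i j =
      (∑ i with p i, ∑ j with p j, K i j) + (∑ i with p i, ∑ j with ¬p j, K i j)
        + ((∑ i with ¬p i, ∑ j with p j, K i j) + ∑ i with ¬p i, ∑ j with ¬p j, K i j) := by
  simp only [sum_filter_add_sum_filter_not, ← sum_add_distrib]

/-- Pairs where both values equal `v` contribute nothing, and by symmetry of `S` the two mixed
blocks contribute equally. -/
theorem sum_sum_mul_norm_sub_sq_ite (p : ι → Prop) [DecidablePred p]
    (S : ι → ι → ℝ) (hS : ∀ i j, S i j = S j i) (g : ι → E) (v : E) :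
    ∑ i, ∑ j, S i j * ‖(if p i then g i else v) - (if p j then g j else v)‖ ^ 2 =
      (∑ i with p i, ∑ j with p j, S i j * ‖g i - g j‖ ^ 2)
        + 2 * ∑ i with p i, ∑ j with ¬p j, S i j * ‖g i - v‖ ^ 2 := by
  set f : ι → E := fun i => if p i then g i else v
  have inside : ∑ i with p i, ∑ j with p j, S i j * ‖f i - f j‖ ^ 2 =
      ∑ i with p i, ∑ j with p j, S i j * ‖g i - g j‖ ^ 2 :=
    sum_congr rfl fun i hi => sum_congr rfl fun j hj => by
      simp only [f, if_pos (mem_filter.1 hi).2, if_pos (mem_filter.1 hj).2]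
  have mixed : ∑ i with p i, ∑ j with ¬p j, S i j * ‖f i - f j‖ ^ 2 =
      ∑ i with p i, ∑ j with ¬p j, S i j * ‖g i - v‖ ^ 2 :=
    sum_congr rfl fun i hi => sum_congr rfl fun j hj => by
      simp only [f, if_pos (mem_filter.1 hi).2, if_neg (mem_filter.1 hj).2]
  have mixed_symm : ∑ i with ¬p i, ∑ j with p j, S i j * ‖f i - f j‖ ^ 2 =
      ∑ i with p i, ∑ j with ¬p j, S i j * ‖f i - f j‖ ^ 2 := by
    rw [sum_comm]
    simp only [hS, norm_sub_rev]
  have outside : ∑ i with ¬p i, ∑ j with ¬p j, S i j * ‖f i - f j‖ ^ 2 = 0 :=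
    sum_eq_zero fun i hi => sum_eq_zero fun j hj => by
      simp [f, if_neg (mem_filter.1 hi).2, if_neg (mem_filter.1 hj).2]
  rw [sum_sum_eq_sum_blocks p, mixed_symm, outside, inside, mixed]
  ring

end Energy

theorem EuclideanSpace.sum_smul_single_one {ι : Type*} [Fintype ι] [DecidableEq ι]
    (x : EuclideanSpace ℝ ι) : ∑ p, x p • EuclideanSpace.single p (1 : ℝ) = x := by
  simpa using (EuclideanSpace.basisFun ι ℝ).sum_repr x

theorem masc_objective_decomposition_symmetric_general
    (l m c : ℕ)
    (S : Fin (l + m) → Fin (l + m) → ℝ)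
    (hS : ∀ i j, S i j = S j i)
    (Y : Fin (l + m) → EuclideanSpace ℝ (Fin c))
    (Z : Fin c → Fin (l + m) → EuclideanSpace ℝ (Fin c))
    (hZ : ∀ (p : Fin c) (i : Fin (l + m)),
      Z p i = if (i : ℕ) < l then Y i else EuclideanSpace.single p (1 : ℝ))
    (M : EuclideanSpace ℝ (Fin c) → Fin (l + m) → EuclideanSpace ℝ (Fin c))
    (hM : ∀ (lam : EuclideanSpace ℝ (Fin c)) (i : Fin (l + m)),
      M lam i = ∑ p : Fin c, lam p • Z p i)
    (Q : (Fin (l + m) → EuclideanSpace ℝ (Fin c)) → ℝ)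
    (hQ : ∀ N : Fin (l + m) → EuclideanSpace ℝ (Fin c),
      Q N = (1 / 2) * ∑ i : Fin (l + m), ∑ j : Fin (l + m), S i j * ‖N i - N j‖ ^ 2)
    (lam : EuclideanSpace ℝ (Fin c)) (hlam : ∑ p : Fin c, lam p = 1) :
    Q (M lam) =
      (1 / 2) * (∑ i ∈ univ.filter (fun i : Fin (l + m) => (i : ℕ) < l),
          ∑ j ∈ univ.filter (fun j : Fin (l + m) => (j : ℕ) < l),
            S i j * ‖Y i - Y j‖ ^ 2)
      + (∑ i ∈ univ.filter (fun i : Fin (l + m) => (i : ℕ) < l),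
          ∑ j ∈ univ.filter (fun j : Fin (l + m) => l ≤ (j : ℕ)),
            S i j * ‖Y i - lam‖ ^ 2) := by
  have label_matrix : M lam = fun i : Fin (l + m) => if (i : ℕ) < l then Y i else lam := by
    funext i
    by_cases hi : (i : ℕ) < l
    · simp only [hM, hZ, hi, if_true, ← sum_smul, hlam, one_smul]
    · simp only [hM, hZ, hi, if_false, EuclideanSpace.sum_smul_single_one]
  rw [hQ, label_matrix, sum_sum_mul_norm_sub_sq_ite _ S hS]
  simp only [not_lt]
  ring

/-- If the similarity matrix S is symmetric, then for every λ ∈ ℝ^c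
with Σ_p λ_p = 1 one has Q(M(λ)) = C + Σ_{i ≤ l, j > l} S_{ij} ‖Y_i − λ‖², where
C = (1/2) Σ_{i ≤ l, j ≤ l} S_{ij} ‖Y_i − Y_j‖². -/
theorem masc_objective_decomposition_symmetric
    (l m c : ℕ) (hl : 1 ≤ l) (hm : 1 ≤ m) (hc : 1 ≤ c)
    (S : Fin (l + m) → Fin (l + m) → ℝ)
    (hS : ∀ i j, S i j = S j i)
    (Y : Fin (l + m) → EuclideanSpace ℝ (Fin c))
    (Z : Fin c → Fin (l + m) → EuclideanSpace ℝ (Fin c))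
    (hZ : ∀ (p : Fin c) (i : Fin (l + m)),
      Z p i = if (i : ℕ) < l then Y i else EuclideanSpace.single p (1 : ℝ))
    (M : EuclideanSpace ℝ (Fin c) → Fin (l + m) → EuclideanSpace ℝ (Fin c))
    (hM : ∀ (lam : EuclideanSpace ℝ (Fin c)) (i : Fin (l + m)),
      M lam i = ∑ p : Fin c, lam p • Z p i)
    (Q : (Fin (l + m) → EuclideanSpace ℝ (Fin c)) → ℝ)
    (hQ : ∀ N : Fin (l + m) → EuclideanSpace ℝ (Fin c),
      Q N = (1 / 2) * ∑ i : Fin (l + m), ∑ j : Fin (l + m), S i j * ‖N i - N j‖ ^ 2)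
    (lam : EuclideanSpace ℝ (Fin c)) (hlam : ∑ p : Fin c, lam p = 1) :
    Q (M lam) =
      (1 / 2) * (∑ i ∈ univ.filter (fun i : Fin (l + m) => (i : ℕ) < l),
          ∑ j ∈ univ.filter (fun j : Fin (l + m) => (j : ℕ) < l),
            S i j * ‖Y i - Y j‖ ^ 2)
      + (∑ i ∈ univ.filter (fun i : Fin (l + m) => (i : ℕ) < l),
          ∑ j ∈ univ.filter (fun j : Fin (l + m) => l ≤ (j : ℕ)),
            S i j * ‖Y i - lam‖ ^ 2) :=
  masc_objective_decomposition_symmetric_general l m c S hS Y Z hZ M hM Q hQ lam hlam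
end

section
/- Define the MASC score q(p) = Σ_{i ≤ l, j > l} S_{ij} ‖Y_i − e_p‖² + Σ_{i > l, j ≤ l} S_{ij} ‖Y_j − e_p‖² for p ∈ {1,…,c}. Then for every p, Q(Z_p) = C + (1/2) q(p), where C = (1/2) Σ_{i ≤ l, j ≤ l} S_{ij} ‖Y_i − Y_j‖². Consequently, an index p̂ minimizes q(p) over p ∈ {1,…,c} if and only if e_{p̂} minimizes Q(M(λ)) over λ ∈ Λ = {λ ∈ ℝ^c : λ_q ∈ {0,1}, Σ_q λ_q = 1}; i.e., the MASC algorithm returns an exact solution of the optimization problem OPT. -/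
open Finset

/-- With the MASC score
q(p) = Σ_{i ≤ l, j > l} S_{ij} ‖Y_i − e_p‖² + Σ_{i > l, j ≤ l} S_{ij} ‖Y_j − e_p‖²,
one has Q(Z_p) = C + (1/2) q(p) for every p, where
C = (1/2) Σ_{i ≤ l, j ≤ l} S_{ij} ‖Y_i − Y_j‖². Consequently, p̂ minimizes q over
{1,…,c} iff e_{p̂} minimizes Q(M(λ)) over λ ∈ Λ = {λ : λ_q ∈ {0,1}, Σ_q λ_q = 1};
i.e., MASC returns an exact solution of OPT. -/
theorem masc_algorithm_exact
    (l m c : ℕ) (hl : 1 ≤ l) (hm : 1 ≤ m) (hc : 1 ≤ c)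
    (S : Fin (l + m) → Fin (l + m) → ℝ)
    (Y : Fin (l + m) → EuclideanSpace ℝ (Fin c))
    (Z : Fin c → Fin (l + m) → EuclideanSpace ℝ (Fin c))
    (hZ : ∀ (p : Fin c) (i : Fin (l + m)),
      Z p i = if (i : ℕ) < l then Y i else EuclideanSpace.single p (1 : ℝ))
    (M : EuclideanSpace ℝ (Fin c) → Fin (l + m) → EuclideanSpace ℝ (Fin c))
    (hM : ∀ (lam : EuclideanSpace ℝ (Fin c)) (i : Fin (l + m)),
      M lam i = ∑ p : Fin c, lam p • Z p i)
    (Q : (Fin (l + m) → EuclideanSpace ℝ (Fin c)) → ℝ)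
    (hQ : ∀ N : Fin (l + m) → EuclideanSpace ℝ (Fin c),
      Q N = (1 / 2) * ∑ i : Fin (l + m), ∑ j : Fin (l + m), S i j * ‖N i - N j‖ ^ 2)
    (q : Fin c → ℝ)
    (hq : ∀ p : Fin c,
      q p = (∑ i ∈ univ.filter (fun i : Fin (l + m) => (i : ℕ) < l),
              ∑ j ∈ univ.filter (fun j : Fin (l + m) => l ≤ (j : ℕ)),
                S i j * ‖Y i - EuclideanSpace.single p (1 : ℝ)‖ ^ 2)
          + (∑ i ∈ univ.filter (fun i : Fin (l + m) => l ≤ (i : ℕ)),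
              ∑ j ∈ univ.filter (fun j : Fin (l + m) => (j : ℕ) < l),
                S i j * ‖Y j - EuclideanSpace.single p (1 : ℝ)‖ ^ 2)) :
    (∀ p : Fin c,
      Q (Z p) = (1 / 2) * (∑ i ∈ univ.filter (fun i : Fin (l + m) => (i : ℕ) < l),
            ∑ j ∈ univ.filter (fun j : Fin (l + m) => (j : ℕ) < l),
              S i j * ‖Y i - Y j‖ ^ 2)
          + (1 / 2) * q p)
    ∧ (∀ phat : Fin c,
        (∀ p : Fin c, q phat ≤ q p) ↔
        (∀ lam : EuclideanSpace ℝ (Fin c),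
          ((∀ r : Fin c, lam r = 0 ∨ lam r = 1) ∧ ∑ r : Fin c, lam r = 1) →
            Q (M (EuclideanSpace.single phat (1 : ℝ))) ≤ Q (M lam))) := by
  set A := univ.filter (fun i : Fin (l + m) => (i : ℕ) < l) with hA
  set B := univ.filter (fun i : Fin (l + m) => l ≤ (i : ℕ)) with hB
  have hZA : ∀ (p : Fin c) (i : Fin (l + m)), i ∈ A → Z p i = Y i := by
    intro p i hi
    rw [hZ]
    simp only [hA, mem_filter] at hi
    simp [hi.2]
  have hZB : ∀ (p : Fin c) (i : Fin (l + m)), i ∈ B →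
      Z p i = EuclideanSpace.single p (1 : ℝ) := by
    intro p i hi
    rw [hZ]
    simp only [hB, mem_filter] at hi
    simp [Nat.not_lt.mpr hi.2]
  have hsplit : ∀ f : Fin (l + m) → ℝ,
      ∑ i : Fin (l + m), f i = ∑ i ∈ A, f i + ∑ i ∈ B, f i := by
    intro f
    rw [hA, hB, ← Finset.sum_filter_add_sum_filter_not univ
      (fun i : Fin (l + m) => (i : ℕ) < l) f]
    congr 1
    apply Finset.sum_congr _ (fun _ _ => rfl)
    ext i; simp [not_lt]
  have key : ∀ p : Fin c,
      Q (Z p) = (1 / 2) * (∑ i ∈ A, ∑ j ∈ A, S i j * ‖Y i - Y j‖ ^ 2)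
        + (1 / 2) * q p := by
    intro p
    rw [hQ, hq, hsplit]
    have h1 : ∀ i ∈ A, ∑ j : Fin (l + m), S i j * ‖Z p i - Z p j‖ ^ 2
        = (∑ j ∈ A, S i j * ‖Y i - Y j‖ ^ 2)
          + ∑ j ∈ B, S i j * ‖Y i - EuclideanSpace.single p (1 : ℝ)‖ ^ 2 := by
      intro i hi
      rw [hsplit]
      congr 1
      · exact Finset.sum_congr rfl (fun j hj => by rw [hZA p i hi, hZA p j hj])
      · exact Finset.sum_congr rfl (fun j hj => by rw [hZA p i hi, hZB p j hj])
    have h2 : ∀ i ∈ B, ∑ j : Fin (l + m), S i j * ‖Z p i - Z p j‖ ^ 2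
        = ∑ j ∈ A, S i j * ‖Y j - EuclideanSpace.single p (1 : ℝ)‖ ^ 2 := by
      intro i hi
      rw [hsplit]
      have hz : ∑ j ∈ B, S i j * ‖Z p i - Z p j‖ ^ 2 = 0 := by
        apply Finset.sum_eq_zero
        intro j hj
        rw [hZB p i hi, hZB p j hj]
        simp
      rw [hz, add_zero]
      exact Finset.sum_congr rfl (fun j hj => by
        rw [hZB p i hi, hZA p j hj, norm_sub_rev])
    rw [Finset.sum_congr rfl h1, Finset.sum_congr rfl h2, Finset.sum_add_distrib]
    ring
  refine ⟨key, ?_⟩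
  intro phat
  have hMsingle : ∀ r : Fin c, M (EuclideanSpace.single r (1 : ℝ)) = Z r := by
    intro r; funext i
    rw [hM]
    have hterm : ∀ p : Fin c, (EuclideanSpace.single r (1 : ℝ)) p • Z p i
        = if p = r then Z r i else 0 := by
      intro p
      by_cases h : p = r <;> simp [EuclideanSpace.single_apply, h]
    simp [hterm]
  have hlam : ∀ lam : EuclideanSpace ℝ (Fin c),
      ((∀ r : Fin c, lam r = 0 ∨ lam r = 1) ∧ ∑ r : Fin c, lam r = 1) →
      ∃ r : Fin c, M lam = Z r := by
    rintro lam ⟨h01, hsum⟩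
    have hex : ∃ r, lam r = 1 := by
      by_contra h
      push_neg at h
      have hz : ∀ r, lam r = 0 := fun r => (h01 r).resolve_right (h r)
      simp [hz] at hsum
    obtain ⟨r, hr⟩ := hex
    have hsum' := hsum
    rw [← Finset.add_sum_erase univ lam (Finset.mem_univ r), hr] at hsum'
    have hsum0 : ∑ x ∈ univ.erase r, lam x = 0 := by linarith
    have hnn : ∀ x ∈ univ.erase r, 0 ≤ lam x := by
      intro x _; rcases h01 x with h | h <;> simp [h]
    have hzero : ∀ r' : Fin c, r' ≠ r → lam r' = 0 := by
      intro r' hne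
      exact (Finset.sum_eq_zero_iff_of_nonneg hnn).mp hsum0 r' (by simp [hne])
    refine ⟨r, ?_⟩
    funext i
    rw [hM]
    have hterm : ∀ p : Fin c, lam p • Z p i = if p = r then Z r i else 0 := by
      intro p
      by_cases h : p = r
      · subst h; simp [hr]
      · simp [hzero p h, h]
    simp [hterm]
  constructor
  · rintro hmin lam ⟨h01, hsum⟩
    obtain ⟨r, hr⟩ := hlam lam ⟨h01, hsum⟩
    rw [hMsingle, hr, key, key]
    linarith [hmin r]
  · intro hQmin p
    have hcond : (∀ r : Fin c, (EuclideanSpace.single p (1 : ℝ)) r = 0 ∨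
        (EuclideanSpace.single p (1 : ℝ)) r = 1) ∧
        ∑ r : Fin c, (EuclideanSpace.single p (1 : ℝ)) r = 1 := by
      constructor
      · intro r
        by_cases h : r = p
        · right; simp [EuclideanSpace.single_apply, h]
        · left; simp [EuclideanSpace.single_apply, h]
      · simp [EuclideanSpace.single_apply]
    have := hQmin (EuclideanSpace.single p (1 : ℝ)) hcond
    rw [hMsingle, hMsingle, key, key] at this
    linarith
end
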